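/- Let β, s, μ > 0, let 1 < w < P, and let ν ∈ ℝ^P with coordinates sorted in descending order: ν₁ ≥ ν₂ ≥ … ≥ ν_P. Consider minimizing F(x) = −β·log(Σᵢ xᵢ) + s/(Σᵢ xᵢ) + (μ/2)·‖x − ν‖² over the set {x ∈ ℝ^P : xᵢ ≥ 0 for all i, at most w coordinates of x are nonzero, and Σᵢ xᵢ > 0}. Then this problem has a global minimizer x* such that x*ᵢ = 0 for all i > w, and there exists ζ > 0 with x*ᵢ = max(0, νᵢ + ζ) for i = 1, …, w and μζ = β/S + s/S², where S = Σ_{i=1}^{w} max(0, νᵢ + ζ). -/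

import Mathlib

/-!
Sorting `x` in decreasing order changes neither `∑ xᵢ` nor `∑ xᵢ²`, and by the rearrangement
inequality it can only increase `⟪x, ν⟫` since `ν` is sorted as well; a sorted feasible point
vanishes beyond index `w`. It therefore suffices to minimize over the convex set of
nonnegative `x` supported on the first `w` coordinates. There the objective is convex, and the
water-filling point `xᵢ = max(0, νᵢ + ζ)` satisfies the KKT conditions with multiplier
`μζ = β/S + s/S²`; such a level `ζ` exists by the intermediate value theorem applied to
`μ ζ S(ζ)² − β S(ζ) − s`.
-/

open Finset

namespace XSubproblem

variable {ι : Type*}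

noncomputable def objective [Fintype ι] (β s μ : ℝ) (ν x : ι → ℝ) : ℝ :=
  -β * Real.log (∑ i, x i) + s / (∑ i, x i) + (μ / 2) * ∑ i, (x i - ν i) ^ 2

noncomputable def waterFill [DecidableEq ι] (ν : ι → ℝ) (A : Finset ι) (ζ : ℝ) (i : ι) : ℝ :=
  if i ∈ A then max 0 (ν i + ζ) else 0

section WaterFill

variable [DecidableEq ι] {ν : ι → ℝ} {A : Finset ι} {ζ : ℝ} {i : ι}

lemma waterFill_of_mem (hi : i ∈ A) : waterFill ν A ζ i = max 0 (ν i + ζ) := if_pos hi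

lemma waterFill_of_notMem (hi : i ∉ A) : waterFill ν A ζ i = 0 := if_neg hi

lemma waterFill_nonneg (i : ι) : 0 ≤ waterFill ν A ζ i := by
  unfold waterFill
  split_ifs
  exacts [le_max_left _ _, le_rfl]

lemma sum_waterFill [Fintype ι] : ∑ i, waterFill ν A ζ i = ∑ i ∈ A, max 0 (ν i + ζ) := by
  simp only [waterFill, sum_ite_mem, univ_inter]

lemma ncard_waterFill_ne_zero_le : Set.ncard {i | waterFill ν A ζ i ≠ 0} ≤ #A := by
  rw [← Set.ncard_coe_finset]
  refine Set.ncard_le_ncard (fun i hi => ?_) A.finite_toSet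
  by_contra hiA
  exact hi (waterFill_of_notMem hiA)

end WaterFill

lemma neg_log_add_div_tangent_le {β s S T : ℝ} (hβ : 0 ≤ β) (hs : 0 ≤ s) (hS : 0 < S)
    (hT : 0 < T) :
    -β * Real.log S + s / S - (β / S + s / S ^ 2) * (T - S) ≤ -β * Real.log T + s / T := by
  have hlog : Real.log T - Real.log S ≤ T / S - 1 := by
    rw [← Real.log_div hT.ne' hS.ne']
    exact Real.log_le_sub_one_of_pos (by positivity)
  have hlin : β * (T / S - 1) = β / S * (T - S) := by field_simp
  have hinv : s / T - (s / S - s / S ^ 2 * (T - S)) = s * (T - S) ^ 2 / (T * S ^ 2) := by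
    field_simp
    ring
  have : 0 ≤ s * (T - S) ^ 2 / (T * S ^ 2) := by positivity
  nlinarith [mul_le_mul_of_nonneg_left hlog hβ]

lemma isMinOn_max_zero_add (ν ζ : ℝ) :
    IsMinOn (fun t => (t - ν) ^ 2 - 2 * ζ * t) (Set.Ici 0) (max 0 (ν + ζ)) := by
  intro y (hy : 0 ≤ y)
  rcases le_total 0 (ν + ζ) with h | h
  · simp only [Set.mem_ofPred_eq, max_eq_right h]
    nlinarith [sq_nonneg (y - (ν + ζ))]
  · simp only [Set.mem_ofPred_eq, max_eq_left h]
    nlinarith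

lemma exists_waterLevel {β s μ : ℝ} (hβ : 0 < β) (hs : 0 < s) (hμ : 0 < μ) (ν : ι → ℝ)
    {A : Finset ι} (hA : A.Nonempty) :
    ∃ ζ > 0, 0 < ∑ i ∈ A, max 0 (ν i + ζ) ∧
      μ * ζ = β / ∑ i ∈ A, max 0 (ν i + ζ) + s / (∑ i ∈ A, max 0 (ν i + ζ)) ^ 2 := by
  set S : ℝ → ℝ := fun z => ∑ i ∈ A, max 0 (ν i + z)
  set h : ℝ → ℝ := fun z => μ * z * S z ^ 2 - β * S z - s
  have hS_nonneg (z : ℝ) : 0 ≤ S z := sum_nonneg fun i _ => le_max_left _ _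
  have hh : Continuous h := by
    have : Continuous S := continuous_finsetSum _ fun i _ => by fun_prop
    fun_prop
  obtain ⟨i₀, hi₀⟩ := hA
  set Z := max (1 - ν i₀) ((β + s) / μ)
  have hZ : 0 ≤ Z := le_max_of_le_right (by positivity)
  have hμZ : β + s ≤ μ * Z := by
    rw [← div_le_iff₀' hμ]
    exact le_max_right _ _
  have hSZ : 1 ≤ S Z := by
    have h₀ : 1 ≤ max 0 (ν i₀ + Z) :=
      le_max_of_le_right (by linarith [le_max_left (1 - ν i₀) ((β + s) / μ)])
    exact h₀.trans (single_le_sum (f := fun i => max 0 (ν i + Z))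
      (fun i _ => le_max_left _ _) hi₀)
  have hh0 : h 0 < 0 := by
    have := hS_nonneg 0
    simp only [h]
    nlinarith
  have hhZ : 0 ≤ h Z := by
    have : (β + s) * S Z ^ 2 ≤ μ * Z * S Z ^ 2 := by gcongr
    simp only [h]
    nlinarith [mul_nonneg (mul_nonneg hβ.le (hS_nonneg Z)) (sub_nonneg.2 hSZ),
      mul_nonneg hs.le (sub_nonneg.2 hSZ)]
  obtain ⟨ζ, ⟨hζ_nonneg, -⟩, hhζ⟩ := intermediate_value_Icc hZ hh.continuousOn ⟨hh0.le, hhZ⟩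
  have hζ : 0 < ζ := hζ_nonneg.lt_of_ne (by rintro rfl; exact hh0.ne hhζ)
  have hSζ : 0 < S ζ := by
    refine (hS_nonneg ζ).lt_of_ne fun h0 => ?_
    simp only [h, ← h0] at hhζ
    linarith
  refine ⟨ζ, hζ, hSζ, ?_⟩
  simp only [h] at hhζ
  change μ * ζ = β / S ζ + s / S ζ ^ 2
  field_simp
  linear_combination hhζ

lemma objective_waterFill_le [Fintype ι] [DecidableEq ι] {β s μ ζ : ℝ} (hβ : 0 ≤ β)
    (hs : 0 ≤ s) (hμ : 0 ≤ μ) (ν : ι → ℝ) (A : Finset ι)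
    (hS : 0 < ∑ i ∈ A, max 0 (ν i + ζ))
    (hζ : μ * ζ = β / ∑ i ∈ A, max 0 (ν i + ζ) + s / (∑ i ∈ A, max 0 (ν i + ζ)) ^ 2)
    {y : ι → ℝ} (hy : ∀ i, 0 ≤ y i) (hyA : ∀ i ∉ A, y i = 0) (hy_sum : 0 < ∑ i, y i) :
    objective β s μ ν (waterFill ν A ζ) ≤ objective β s μ ν y := by
  set x := waterFill ν A ζ
  have hquad (i : ι) : (x i - ν i) ^ 2 - 2 * ζ * x i ≤ (y i - ν i) ^ 2 - 2 * ζ * y i := by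
    by_cases hi : i ∈ A
    · rw [show x i = _ from waterFill_of_mem hi]
      exact isMinOn_max_zero_add (ν i) ζ (hy i)
    · rw [show x i = _ from waterFill_of_notMem hi, hyA i hi]
  have hquad_sum : ∑ i, (x i - ν i) ^ 2 + 2 * ζ * (∑ i, y i - ∑ i, x i)
      ≤ ∑ i, (y i - ν i) ^ 2 := by
    have := sum_le_sum fun i (_ : i ∈ univ) => hquad i
    simp only [sum_sub_distrib, ← mul_sum] at this
    linarith
  have htangent := neg_log_add_div_tangent_le hβ hs hS hy_sum
  rw [← hζ, ← sum_waterFill] at htangent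
  unfold objective
  nlinarith [mul_le_mul_of_nonneg_left hquad_sum (by positivity : (0:ℝ) ≤ μ / 2)]

lemma objective_comp_perm_le [Fintype ι] {β s μ : ℝ} (hμ : 0 ≤ μ) {ν x : ι → ℝ}
    (σ : Equiv.Perm ι) (hσ : Monovary (x ∘ σ) ν) :
    objective β s μ ν (x ∘ σ) ≤ objective β s μ ν x := by
  have hexpand (z : ι → ℝ) :
      ∑ i, (z i - ν i) ^ 2 = ∑ i, z i ^ 2 - 2 * ∑ i, z i * ν i + ∑ i, ν i ^ 2 := by
    simp only [sub_sq, sum_add_distrib, sum_sub_distrib, mul_sum, mul_assoc]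
  have hrearrange : ∑ i, x i * ν i ≤ ∑ i, x (σ i) * ν i := by
    simpa using hσ.sum_comp_perm_mul_le_sum_mul (σ := σ.symm)
  have hquad : ∑ i, (x (σ i) - ν i) ^ 2 ≤ ∑ i, (x i - ν i) ^ 2 := by
    rw [hexpand, hexpand x, Equiv.sum_comp σ (fun i => x i ^ 2)]
    linarith
  unfold objective
  rw [Function.comp_def, Equiv.sum_comp σ x]
  gcongr

lemma exists_antitone_comp_perm {α : Type*} [LinearOrder α] {n : ℕ} (x : Fin n → α) :
    ∃ σ : Equiv.Perm (Fin n), Antitone (x ∘ σ) :=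
  ⟨Tuple.sort (OrderDual.toDual ∘ x), Tuple.monotone_sort (OrderDual.toDual ∘ x)⟩

lemma apply_eq_zero_of_antitone {α : Type*} [LinearOrder α] [Zero α] {n w : ℕ}
    {y : Fin n → α} (hy : ∀ i, 0 ≤ y i) (hanti : Antitone y)
    (hw : Set.ncard {i | y i ≠ 0} ≤ w) {i : Fin n} (hi : w ≤ i) : y i = 0 := by
  by_contra hyi
  have hsub : Set.Iic i ⊆ {j | y j ≠ 0} := fun j hj =>
    (((hy i).lt_of_ne' hyi).trans_le (hanti hj)).ne'
  have := Set.ncard_le_ncard hsub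
  rw [← coe_Iic, Set.ncard_coe_finset, Fin.card_Iic] at this
  omega

end XSubproblem

open XSubproblem in
/-- Lemma 3 of the paper: the x-subproblem with cardinality bound `1 < w < P` and ν
sorted in descending order has a global minimizer supported on the first `w`
coordinates, characterized by a multiplier ζ > 0 via
`x*ᵢ = max(0, νᵢ + ζ)` for `i ≤ w` and `μζ = β/S + s/S²`,
`S = Σ_{i≤w} max(0, νᵢ + ζ)`. -/
theorem stmt5 (β s μ : ℝ) (hβ : 0 < β) (hs : 0 < s) (hμ : 0 < μ)
    (P w : ℕ) (hw1 : 1 < w) (hwP : w < P) (ν : Fin P → ℝ)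
    (hsorted : ∀ i j : Fin P, i ≤ j → ν j ≤ ν i) :
    ∃ xstar : Fin P → ℝ,
      ((∀ i, 0 ≤ xstar i) ∧ Set.ncard {i | xstar i ≠ 0} ≤ w ∧ 0 < ∑ i, xstar i) ∧
      (∀ x : Fin P → ℝ, (∀ i, 0 ≤ x i) → Set.ncard {i | x i ≠ 0} ≤ w →
        0 < ∑ i, x i →
        (-β * Real.log (∑ i, xstar i) + s / (∑ i, xstar i)
            + (μ / 2) * ∑ i, (xstar i - ν i) ^ 2)
          ≤ (-β * Real.log (∑ i, x i) + s / (∑ i, x i)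
            + (μ / 2) * ∑ i, (x i - ν i) ^ 2)) ∧
      (∀ i : Fin P, w ≤ (i : ℕ) → xstar i = 0) ∧
      ∃ ζ : ℝ, 0 < ζ ∧
        (∀ i : Fin P, (i : ℕ) < w → xstar i = max 0 (ν i + ζ)) ∧
        μ * ζ = β / (∑ i ∈ Finset.univ.filter (fun i : Fin P => (i : ℕ) < w),
                      max 0 (ν i + ζ))
              + s / (∑ i ∈ Finset.univ.filter (fun i : Fin P => (i : ℕ) < w),
                      max 0 (ν i + ζ)) ^ 2 := by
  set A : Finset (Fin P) := univ.filter (fun i : Fin P => (i : ℕ) < w)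
  have hA : A.Nonempty :=
    ⟨⟨0, by omega⟩, by simp only [A, mem_filter, mem_univ, true_and]; omega⟩
  obtain ⟨ζ, hζ, hS, hζS⟩ := exists_waterLevel hβ hs hμ ν hA
  refine ⟨waterFill ν A ζ, ⟨waterFill_nonneg, ?_, by rwa [sum_waterFill]⟩, ?_,
    fun i hi => waterFill_of_notMem (by simpa [A] using hi), ζ, hζ,
    fun i hi => waterFill_of_mem (by simpa [A] using hi), hζS⟩
  · calc Set.ncard {i | waterFill ν A ζ i ≠ 0} ≤ #A := ncard_waterFill_ne_zero_le
      _ ≤ w := by simp [A, Fin.card_filter_val_lt]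
  · intro x hx hxw hx_sum
    obtain ⟨σ, hσ⟩ := exists_antitone_comp_perm x
    have hxσw : Set.ncard {i | x (σ i) ≠ 0} ≤ w := by
      rwa [show {i | x (σ i) ≠ 0} = σ ⁻¹' {i | x i ≠ 0} from rfl,
        Set.ncard_preimage_of_injective_subset_range σ.injective (by simp)]
    calc objective β s μ ν (waterFill ν A ζ) ≤ objective β s μ ν (x ∘ σ) :=
          objective_waterFill_le hβ.le hs.le hμ.le ν A hS hζS (fun i => hx (σ i))
            (fun i hi => apply_eq_zero_of_antitone (fun j => hx (σ j)) hσ hxσw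
              (by simpa [A] using hi))
            (by rwa [Function.comp_def, Equiv.sum_comp σ x])
      _ ≤ objective β s μ ν x := objective_comp_perm_le hμ.le σ (hσ.monovary hsorted)
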